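/- Let W be a random n×n row-stochastic matrix with E[W⊗W] having a simple unit eigenvalue, and suppose the infinite product of i.i.d. copies converges a.s. to 1·d^T. Then Var(d^T x(0)) = (x(0)⊗x(0))^T v_1(E[W⊗W]) - (x(0)^T v_1(E[W]))^2, where v_1(·) denotes the normalized left eigenvector for eigenvalue 1. -/

import Mathlib

/-!
Let `P k = W k ⋯ W 1`. Since `W (k + 1)` is independent of `P k` and
`(AB) ⊗ (AB) = (A ⊗ A)(B ⊗ B)`, we get `E[P k] = E[W]^k` and `E[P k ⊗ P k] = E[W ⊗ W]^k`.
All these matrices are row-stochastic, so their entries lie in `[0, 1]` and dominated convergence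
turns `P k → 1 dᵀ` into `E[W]^k → 1 E[d]ᵀ` and `E[W ⊗ W]^k → 1 E[d ⊗ d]ᵀ`. A left fixed vector
`v` of `A` with entries summing to one satisfies `v = v Aᵏ → v 1 wᵀ = w` whenever `Aᵏ → 1 wᵀ`;
hence `v = E[d]` and `vR = E[d ⊗ d]`, and the formula is `Var(dᵀx) = E[(dᵀx)²] - E[dᵀx]²`
written out in these moments.
-/

open Matrix MeasureTheory ProbabilityTheory Filter Topology

noncomputable instance matrixMeasurableSpace {n : ℕ} :
    MeasurableSpace (Matrix (Fin n) (Fin n) ℝ) :=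
  (inferInstance : MeasurableSpace (Fin n → Fin n → ℝ))

-- These provide `MeasurableMul₂` for matrices and measurability of continuous maps on them.
instance {n : ℕ} : BorelSpace (Matrix (Fin n) (Fin n) ℝ) :=
  inferInstanceAs (BorelSpace (Fin n → Fin n → ℝ))

instance {n : ℕ} : SecondCountableTopology (Matrix (Fin n) (Fin n) ℝ) :=
  inferInstanceAs (SecondCountableTopology (Fin n → Fin n → ℝ))

lemma Continuous.measurable_matrix_apply {n : ℕ} {m o : Type*}
    {f : Matrix (Fin n) (Fin n) ℝ → Matrix m o ℝ} (hf : Continuous f) (i : m) (j : o) :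
    Measurable fun M => f M i j :=
  ((continuous_apply j).comp ((continuous_apply i).comp hf)).measurable

section BackwardProd

variable {M : Type*} [Monoid M]

def backwardProd (f : ℕ → M) (k : ℕ) : M :=
  (List.range k).foldl (fun P m => f (m + 1) * P) 1

@[simp]
lemma backwardProd_zero (f : ℕ → M) : backwardProd f 0 = 1 := rfl

lemma backwardProd_succ (f : ℕ → M) (k : ℕ) :
    backwardProd f (k + 1) = f (k + 1) * backwardProd f k := by
  simp [backwardProd, List.range_succ]

lemma backwardProd_congr {f g : ℕ → M} {k : ℕ} (h : ∀ m < k, f (m + 1) = g (m + 1)) :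
    backwardProd f k = backwardProd g k := by
  induction k with
  | zero => rfl
  | succ k ih =>
    rw [backwardProd_succ, backwardProd_succ, h k k.lt_succ_self,
      ih fun m hm => h m (hm.trans k.lt_succ_self)]

lemma backwardProd_mem {S : Submonoid M} {f : ℕ → M} (hf : ∀ m, f m ∈ S) (k : ℕ) :
    backwardProd f k ∈ S := by
  induction k with
  | zero => exact S.one_mem
  | succ k ih => rw [backwardProd_succ]; exact S.mul_mem (hf _) ih

variable [MeasurableSpace M] [MeasurableMul₂ M]

lemma Measurable.backwardProd {α : Type*} [MeasurableSpace α] {f : ℕ → α → M}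
    (hf : ∀ m, Measurable (f m)) (k : ℕ) : Measurable fun a => backwardProd (f · a) k := by
  induction k with
  | zero => exact measurable_const
  | succ k ih => simp only [backwardProd_succ]; exact (hf _).mul ih

lemma ProbabilityTheory.iIndepFun.indepFun_backwardProd {Ω : Type*} [MeasurableSpace Ω]
    {μ : Measure Ω} {X : ℕ → Ω → M} (hX : iIndepFun X μ) (hmeas : ∀ m, Measurable (X m))
    (k : ℕ) : IndepFun (X (k + 1)) (fun ω => backwardProd (X · ω) k) μ := by
  -- `backwardProd (X · ω) k` as a function of `(X i ω)_{i ≤ k}`; clamping the index at `k`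
  -- avoids a case split.
  let past (m : ℕ) (g : Finset.range (k + 1) → M) : M :=
    g ⟨min m k, Finset.mem_range.2 (Nat.lt_succ_of_le (min_le_right m k))⟩
  have h := (hX.indepFun_finset {k + 1} (Finset.range (k + 1)) (by simp) hmeas).comp
    (measurable_pi_apply ⟨k + 1, Finset.mem_singleton_self _⟩) (Measurable.backwardProd (f := past)
      (fun m => measurable_pi_apply _) k)
  refine h.congr (.of_forall fun _ => rfl) (.of_forall fun ω => ?_)
  refine backwardProd_congr (k := k) (f := fun m => past m fun i => X i ω) fun m hm => ?_
  simp [past, Nat.min_eq_left hm]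

end BackwardProd

section MeanMatrix

variable {Ω : Type*} [MeasurableSpace Ω] {μ : Measure Ω} {l m o : Type*}

noncomputable def meanMatrix (μ : Measure Ω) (X : Ω → Matrix l o ℝ) : Matrix l o ℝ :=
  Matrix.of fun i j => ∫ ω, X ω i j ∂μ

@[simp]
lemma meanMatrix_apply (X : Ω → Matrix l o ℝ) (i : l) (j : o) :
    meanMatrix μ X i j = ∫ ω, X ω i j ∂μ := rfl

@[simp]
lemma meanMatrix_const [IsProbabilityMeasure μ] (A : Matrix l o ℝ) :
    meanMatrix μ (fun _ => A) = A := by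
  ext i j; simp

lemma meanMatrix_vecMulVec (x : Ω → o → ℝ) (u : l → ℝ) :
    meanMatrix μ (fun ω => vecMulVec u (x ω)) = vecMulVec u fun j => ∫ ω, x ω j ∂μ := by
  ext i j; simp [vecMulVec_apply, integral_const_mul]

lemma meanMatrix_mul_of_indepFun [Fintype m] {β γ : Type*} [MeasurableSpace β]
    [MeasurableSpace γ] {X : Ω → β} {Y : Ω → γ} (hXY : IndepFun X Y μ)
    {f : β → Matrix l m ℝ} {g : γ → Matrix m o ℝ}
    (hf : ∀ i j, Measurable fun b => f b i j) (hg : ∀ i j, Measurable fun c => g c i j)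
    (hfX : ∀ i j, Integrable (fun ω => f (X ω) i j) μ)
    (hgY : ∀ i j, Integrable (fun ω => g (Y ω) i j) μ) :
    meanMatrix μ (fun ω => f (X ω) * g (Y ω)) =
      meanMatrix μ (fun ω => f (X ω)) * meanMatrix μ (fun ω => g (Y ω)) := by
  ext i j
  have hindep (k : m) : IndepFun (fun ω => f (X ω) i k) (fun ω => g (Y ω) k j) μ :=
    hXY.comp (hf i k) (hg k j)
  have hint (k : m) : Integrable (fun ω => f (X ω) i k * g (Y ω) k j) μ :=
    (hindep k).integrable_mul (hfX i k) (hgY k j)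
  simp only [meanMatrix_apply, mul_apply]
  rw [integral_finsetSum _ fun k _ => hint k]
  exact Finset.sum_congr rfl fun k _ =>
    (hindep k).integral_fun_mul_eq_mul_integral (hfX i k).1 (hgY k j).1

lemma ProbabilityTheory.IdentDistrib.meanMatrix_comp_eq {β : Type*} [MeasurableSpace β]
    {X Y : Ω → β} (hXY : IdentDistrib X Y μ μ) {f : β → Matrix l o ℝ}
    (hf : ∀ i j, Measurable fun b => f b i j) :
    meanMatrix μ (fun ω => f (X ω)) = meanMatrix μ (fun ω => f (Y ω)) := by
  ext i j
  exact (hXY.comp (hf i j)).integral_eq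

end MeanMatrix

section RowStochastic

variable {m n : Type*} [Fintype m] [DecidableEq m] [Fintype n] [DecidableEq n]

lemma abs_le_one_of_mem_rowStochastic {M : Matrix m m ℝ} (hM : M ∈ rowStochastic ℝ m)
    (i j : m) : |M i j| ≤ 1 :=
  abs_le.2 ⟨by linarith [nonneg_of_mem_rowStochastic hM (i := i) (j := j)],
    le_one_of_mem_rowStochastic hM⟩

lemma isClosed_rowStochastic : IsClosed (rowStochastic ℝ m : Set (Matrix m m ℝ)) := by
  show IsClosed ({M : Matrix m m ℝ | ∀ i j, 0 ≤ M i j} ∩ {M | M *ᵥ 1 = 1})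
  refine .inter ?_ (isClosed_eq (by fun_prop) continuous_const)
  simp only [Set.ofPred_forall]
  exact isClosed_iInter fun i => isClosed_iInter fun j =>
    isClosed_le continuous_const ((continuous_apply j).comp (continuous_apply i))

lemma kronecker_mem_rowStochastic {A : Matrix m m ℝ} {B : Matrix n n ℝ}
    (hA : A ∈ rowStochastic ℝ m) (hB : B ∈ rowStochastic ℝ n) :
    kronecker A B ∈ rowStochastic ℝ (m × n) := by
  rw [mem_rowStochastic_iff_sum]
  refine ⟨fun p q => mul_nonneg (hA.1 _ _) (hB.1 _ _), fun p => ?_⟩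
  simp [Fintype.sum_prod_type, ← Finset.mul_sum, sum_row_of_mem_rowStochastic hA,
    sum_row_of_mem_rowStochastic hB]

end RowStochastic

lemma vecMulVec_one_kronecker_vecMulVec_one {m n : Type*} (x : m → ℝ) (y : n → ℝ) :
    kronecker (vecMulVec (1 : m → ℝ) x) (vecMulVec (1 : n → ℝ) y) =
      vecMulVec (1 : m × n → ℝ) fun p => x p.1 * y p.2 := by
  ext p q; simp [vecMulVec_apply]

def kroneckerSquare (n : Type*) [Fintype n] [DecidableEq n] :
    Matrix n n ℝ →* Matrix (n × n) (n × n) ℝ where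
  toFun M := kronecker M M
  map_one' := one_kronecker_one
  map_mul' A B := mul_kronecker_mul A B A B

lemma continuous_kroneckerSquare (n : Type*) [Fintype n] [DecidableEq n] :
    Continuous (kroneckerSquare n) :=
  continuous_pi fun p => continuous_pi fun q =>
    ((continuous_apply q.1).comp (continuous_apply p.1)).mul
      ((continuous_apply q.2).comp (continuous_apply p.2))

section Limits

variable {Ω : Type*} [MeasurableSpace Ω] {μ : Measure Ω} {m : Type*} [Fintype m]
  [DecidableEq m] {X : ℕ → Ω → Matrix m m ℝ} {L : Ω → Matrix m m ℝ}

lemma integrable_apply_of_mem_rowStochastic [IsFiniteMeasure μ] {Y : Ω → Matrix m m ℝ}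
    {i j : m} (hmeas : AEStronglyMeasurable (fun ω => Y ω i j) μ)
    (hY : ∀ᵐ ω ∂μ, Y ω ∈ rowStochastic ℝ m) : Integrable (fun ω => Y ω i j) μ :=
  .mono' (integrable_const 1) hmeas <| by
    filter_upwards [hY] with ω hω using abs_le_one_of_mem_rowStochastic hω i j

lemma tendsto_meanMatrix_of_mem_rowStochastic [IsFiniteMeasure μ]
    (hmeas : ∀ k i j, AEStronglyMeasurable (fun ω => X k ω i j) μ)
    (hX : ∀ k, ∀ᵐ ω ∂μ, X k ω ∈ rowStochastic ℝ m)
    (hlim : ∀ᵐ ω ∂μ, Tendsto (X · ω) atTop (𝓝 (L ω))) :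
    Tendsto (fun k => meanMatrix μ (X k)) atTop (𝓝 (meanMatrix μ L)) :=
  tendsto_pi_nhds.2 fun i => tendsto_pi_nhds.2 fun j =>
    tendsto_integral_of_dominated_convergence (fun _ => 1) (hmeas · i j) (integrable_const 1)
      (fun k => by
        filter_upwards [hX k] with ω hω using abs_le_one_of_mem_rowStochastic hω i j)
      (by filter_upwards [hlim] with ω hω using tendsto_pi_nhds.1 (tendsto_pi_nhds.1 hω i) j)

lemma memLp_apply_of_tendsto_of_mem_rowStochastic [IsFiniteMeasure μ]
    (hmeas : ∀ k i j, AEStronglyMeasurable (fun ω => X k ω i j) μ)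
    (hX : ∀ k, ∀ᵐ ω ∂μ, X k ω ∈ rowStochastic ℝ m)
    (hlim : ∀ᵐ ω ∂μ, Tendsto (X · ω) atTop (𝓝 (L ω))) (p : ENNReal) (i j : m) :
    MemLp (fun ω => L ω i j) p μ := by
  have hlim_ij : ∀ᵐ ω ∂μ, Tendsto (X · ω i j) atTop (𝓝 (L ω i j)) := by
    filter_upwards [hlim] with ω hω using tendsto_pi_nhds.1 (tendsto_pi_nhds.1 hω i) j
  have hL : ∀ᵐ ω ∂μ, L ω ∈ rowStochastic ℝ m := by
    filter_upwards [hlim, ae_all_iff.2 hX] with ω hω hXω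
    exact isClosed_rowStochastic.mem_of_tendsto hω (.of_forall hXω)
  refine .of_bound (aestronglyMeasurable_of_tendsto_ae atTop (hmeas · i j) hlim_ij) 1 ?_
  filter_upwards [hL] with ω hω using abs_le_one_of_mem_rowStochastic hω i j

end Limits

lemma vecMul_eq_of_tendsto_pow {m : Type*} [Fintype m] [DecidableEq m] {A L : Matrix m m ℝ}
    {v : m → ℝ} (hv : v ᵥ* A = v) (hA : Tendsto (A ^ ·) atTop (𝓝 L)) : v ᵥ* L = v := by
  have hvk (k : ℕ) : v ᵥ* A ^ k = v := by
    induction k with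
    | zero => simp
    | succ k ih => rw [pow_succ, ← vecMul_vecMul, ih, hv]
  have hcont : Continuous (v ᵥ* · : Matrix m m ℝ → m → ℝ) := by fun_prop
  refine tendsto_nhds_unique ((hcont.tendsto L).comp hA) ?_
  simp only [Function.comp_def, hvk, tendsto_const_nhds]

lemma vecMul_vecMulVec_one {m n : Type*} [Fintype m] {v : m → ℝ} (hv : ∑ i, v i = 1)
    (w : n → ℝ) : v ᵥ* vecMulVec 1 w = w := by
  rw [vecMul_vecMulVec]
  simp [dotProduct, hv]

lemma variance_sum_mul_const {Ω : Type*} [MeasurableSpace Ω] {μ : Measure Ω}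
    [IsProbabilityMeasure μ] {ι : Type*} [Fintype ι] {d : Ω → ι → ℝ}
    (hd : ∀ i, MemLp (fun ω => d ω i) 2 μ) (x : ι → ℝ) :
    variance (fun ω => ∑ i, d ω i * x i) μ =
      ∑ p : ι × ι, x p.1 * x p.2 * ∫ ω, d ω p.1 * d ω p.2 ∂μ -
        (∑ i, x i * ∫ ω, d ω i ∂μ) ^ 2 := by
  rw [variance_fun_sum' fun i _ => (hd i).mul_const (x i)]
  simp only [covariance_mul_const_left, covariance_mul_const_right,
    covariance_eq_sub (hd _) (hd _), Fintype.sum_prod_type, sq, Finset.sum_mul_sum,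
    ← Finset.sum_sub_distrib]
  refine Finset.sum_congr rfl fun i _ => Finset.sum_congr rfl fun j _ => ?_
  simp only [Pi.mul_apply]
  ring

lemma ae_backwardProd_mem_rowStochastic {Ω : Type*} [MeasurableSpace Ω] {μ : Measure Ω}
    {m : Type*} [Fintype m] [DecidableEq m] {W : ℕ → Ω → Matrix m m ℝ}
    (hstoch : ∀ k, ∀ᵐ ω ∂μ, W k ω ∈ rowStochastic ℝ m) :
    ∀ᵐ ω ∂μ, ∀ k, backwardProd (W · ω) k ∈ rowStochastic ℝ m := by
  filter_upwards [ae_all_iff.2 hstoch] with ω hω using backwardProd_mem hω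

section IIDProducts

variable {Ω : Type*} [MeasurableSpace Ω] {μ : Measure Ω} [IsProbabilityMeasure μ] {n : ℕ}
  {m : Type*} [Fintype m] [DecidableEq m] {W : ℕ → Ω → Matrix (Fin n) (Fin n) ℝ}
  {Φ : Matrix (Fin n) (Fin n) ℝ →* Matrix m m ℝ}

lemma meanMatrix_map_backwardProd (hΦ : Continuous Φ)
    (hΦs : ∀ M ∈ rowStochastic ℝ (Fin n), Φ M ∈ rowStochastic ℝ m)
    (hmeas : ∀ k, Measurable (W k)) (hindep : iIndepFun W μ)
    (hident : ∀ k, Measure.map (W k) μ = Measure.map (W 0) μ)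
    (hstoch : ∀ k, ∀ᵐ ω ∂μ, W k ω ∈ rowStochastic ℝ (Fin n)) (k : ℕ) :
    meanMatrix μ (fun ω => Φ (backwardProd (W · ω) k)) =
      meanMatrix μ (fun ω => Φ (W 0 ω)) ^ k := by
  have hint {Y : Ω → Matrix (Fin n) (Fin n) ℝ} (hY : Measurable Y)
      (hYs : ∀ᵐ ω ∂μ, Y ω ∈ rowStochastic ℝ (Fin n)) (i j : m) :
      Integrable (fun ω => Φ (Y ω) i j) μ :=
    integrable_apply_of_mem_rowStochastic
      ((hΦ.measurable_matrix_apply i j).comp hY).aestronglyMeasurable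
      (by filter_upwards [hYs] with ω hω using hΦs _ hω)
  induction k with
  | zero => simp
  | succ k ih =>
    have hP : ∀ᵐ ω ∂μ, backwardProd (W · ω) k ∈ rowStochastic ℝ (Fin n) := by
      filter_upwards [ae_backwardProd_mem_rowStochastic hstoch] with ω hω using hω k
    have hW : IdentDistrib (W (k + 1)) (W 0) μ μ :=
      ⟨(hmeas _).aemeasurable, (hmeas 0).aemeasurable, hident _⟩
    simp only [backwardProd_succ, map_mul]
    rw [meanMatrix_mul_of_indepFun (hindep.indepFun_backwardProd hmeas k)
      hΦ.measurable_matrix_apply hΦ.measurable_matrix_apply (hint (hmeas _) (hstoch _))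
      (hint (Measurable.backwardProd hmeas k) hP), ih,
      hW.meanMatrix_comp_eq hΦ.measurable_matrix_apply, pow_succ']

lemma eq_integral_of_vecMul_meanMatrix_eq_self (hΦ : Continuous Φ)
    (hΦs : ∀ M ∈ rowStochastic ℝ (Fin n), Φ M ∈ rowStochastic ℝ m)
    (hmeas : ∀ k, Measurable (W k)) (hindep : iIndepFun W μ)
    (hident : ∀ k, Measure.map (W k) μ = Measure.map (W 0) μ)
    (hstoch : ∀ k, ∀ᵐ ω ∂μ, W k ω ∈ rowStochastic ℝ (Fin n)) {d : Ω → Fin n → ℝ}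
    (hconv : ∀ᵐ ω ∂μ, Tendsto (backwardProd (W · ω)) atTop (𝓝 (vecMulVec 1 (d ω))))
    {e : Ω → m → ℝ} (he : ∀ ω, Φ (vecMulVec 1 (d ω)) = vecMulVec 1 (e ω))
    {v : m → ℝ} (hv : v ᵥ* meanMatrix μ (fun ω => Φ (W 0 ω)) = v) (hv1 : ∑ i, v i = 1) :
    v = fun j => ∫ ω, e ω j ∂μ := by
  have hlim := tendsto_meanMatrix_of_mem_rowStochastic (μ := μ)
    (X := fun k ω => Φ (backwardProd (W · ω) k)) (L := fun ω => Φ (vecMulVec 1 (d ω)))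
    (fun k i j => (hΦ.measurable_matrix_apply i j).comp
      (Measurable.backwardProd hmeas k) |>.aestronglyMeasurable)
    (fun k => by
      filter_upwards [ae_backwardProd_mem_rowStochastic hstoch] with ω hω using hΦs _ (hω k))
    (by filter_upwards [hconv] with ω hω using (hΦ.tendsto _).comp hω)
  simp only [meanMatrix_map_backwardProd hΦ hΦs hmeas hindep hident hstoch, he,
    meanMatrix_vecMulVec] at hlim
  rw [← vecMul_eq_of_tendsto_pow hv hlim, vecMul_vecMulVec_one hv1]

lemma memLp_of_tendsto_backwardProd (hmeas : ∀ k, Measurable (W k))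
    (hstoch : ∀ k, ∀ᵐ ω ∂μ, W k ω ∈ rowStochastic ℝ (Fin n)) {d : Ω → Fin n → ℝ}
    (hconv : ∀ᵐ ω ∂μ, Tendsto (backwardProd (W · ω)) atTop (𝓝 (vecMulVec 1 (d ω))))
    (p : ENNReal) (j : Fin n) : MemLp (fun ω => d ω j) p μ := by
  simpa [vecMulVec_apply] using memLp_apply_of_tendsto_of_mem_rowStochastic
    (fun k i j => (continuous_id.measurable_matrix_apply i j).comp
      (Measurable.backwardProd hmeas k) |>.aestronglyMeasurable)
    (fun k => by filter_upwards [ae_backwardProd_mem_rowStochastic hstoch] with ω hω using hω k)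
    hconv p j j

end IIDProducts

theorem variance_of_asymptotic_consensus_value_general
    {Ω : Type*} [MeasurableSpace Ω] (μ : Measure Ω) [IsProbabilityMeasure μ]
    {n : ℕ}
    (W : ℕ → Ω → Matrix (Fin n) (Fin n) ℝ)
    (hmeas : ∀ k, Measurable (W k))
    (hindep : iIndepFun W μ)
    (hident : ∀ k, Measure.map (W k) μ = Measure.map (W 0) μ)
    (hstoch : ∀ k, ∀ᵐ ω ∂μ, (∀ i j, 0 ≤ W k ω i j) ∧
        W k ω *ᵥ (fun _ => (1 : ℝ)) = fun _ => (1 : ℝ))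
    (d : Ω → Fin n → ℝ)
    (hconv : ∀ᵐ ω ∂μ,
        Tendsto (fun k => (List.range k).foldl (fun P m => W (m + 1) ω * P) 1)
          atTop (nhds (Matrix.vecMulVec (fun _ => (1 : ℝ)) (d ω))))
    (EW : Matrix (Fin n) (Fin n) ℝ) (hEW : ∀ i j, EW i j = ∫ ω, W 0 ω i j ∂μ)
    (ER : Matrix (Fin n × Fin n) (Fin n × Fin n) ℝ)
    (hER : ∀ p q : Fin n × Fin n,
        ER p q = ∫ ω, W 0 ω p.1 q.1 * W 0 ω p.2 q.2 ∂μ)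
    (v : Fin n → ℝ) (hv : v ᵥ* EW = v) (hv1 : ∑ i, v i = 1)
    (vR : Fin n × Fin n → ℝ) (hvR : vR ᵥ* ER = vR) (hvR1 : ∑ p, vR p = 1)
    (x0 : Fin n → ℝ) :
    variance (fun ω => ∑ i, d ω i * x0 i) μ
      = (∑ p : Fin n × Fin n, x0 p.1 * x0 p.2 * vR p) - (∑ i, x0 i * v i) ^ 2 := by
  have hstoch' : ∀ k, ∀ᵐ ω ∂μ, W k ω ∈ rowStochastic ℝ (Fin n) := hstoch
  have hconv' : ∀ᵐ ω ∂μ, Tendsto (backwardProd (W · ω)) atTop (𝓝 (vecMulVec 1 (d ω))) := hconv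
  have hEd : v = fun j => ∫ ω, d ω j ∂μ :=
    eq_integral_of_vecMul_meanMatrix_eq_self (Φ := MonoidHom.id _) continuous_id
      (fun _ h => h) hmeas hindep hident hstoch' hconv' (fun _ => rfl)
      (by rw [show EW = meanMatrix μ (W 0) from Matrix.ext hEW] at hv; exact hv) hv1
  have hEdd : vR = fun p => ∫ ω, d ω p.1 * d ω p.2 ∂μ :=
    eq_integral_of_vecMul_meanMatrix_eq_self (Φ := kroneckerSquare (Fin n))
      (continuous_kroneckerSquare _) (fun _ h => kronecker_mem_rowStochastic h h) hmeas hindep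
      hident hstoch' hconv' (fun _ => vecMulVec_one_kronecker_vecMulVec_one _ _)
      (by rwa [show ER = meanMatrix μ (fun ω => kroneckerSquare (Fin n) (W 0 ω)) from
        Matrix.ext hER] at hvR) hvR1
  rw [variance_sum_mul_const (memLp_of_tendsto_backwardProd hmeas hstoch' hconv' 2), hEd,
    hEdd]

/-- For i.i.d. random row-stochastic matrices whose backward products converge a.s. to
`1 dᵀ`, and such that `E[W ⊗ W]` has a simple unit eigenvalue, the variance of the
asymptotic consensus value `x* = dᵀ x(0)` equals
`(x(0) ⊗ x(0))ᵀ v₁(E[W⊗W]) - (x(0)ᵀ v₁(E[W]))²`. -/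
theorem variance_of_asymptotic_consensus_value
    {Ω : Type*} [MeasurableSpace Ω] (μ : Measure Ω) [IsProbabilityMeasure μ]
    {n : ℕ} (hn : 0 < n)
    (W : ℕ → Ω → Matrix (Fin n) (Fin n) ℝ)
    (hmeas : ∀ k, Measurable (W k))
    (hindep : iIndepFun W μ)
    (hident : ∀ k, Measure.map (W k) μ = Measure.map (W 0) μ)
    (hstoch : ∀ k, ∀ᵐ ω ∂μ, (∀ i j, 0 ≤ W k ω i j) ∧
        W k ω *ᵥ (fun _ => (1 : ℝ)) = fun _ => (1 : ℝ))
    (d : Ω → Fin n → ℝ)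
    (hconv : ∀ᵐ ω ∂μ,
        Tendsto (fun k => (List.range k).foldl (fun P m => W (m + 1) ω * P) 1)
          atTop (nhds (Matrix.vecMulVec (fun _ => (1 : ℝ)) (d ω))))
    (EW : Matrix (Fin n) (Fin n) ℝ) (hEW : ∀ i j, EW i j = ∫ ω, W 0 ω i j ∂μ)
    (ER : Matrix (Fin n × Fin n) (Fin n × Fin n) ℝ)
    (hER : ∀ p q : Fin n × Fin n,
        ER p q = ∫ ω, W 0 ω p.1 q.1 * W 0 ω p.2 q.2 ∂μ)
    (hsimple : Polynomial.rootMultiplicity (1 : ℝ) ER.charpoly = 1)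
    (v : Fin n → ℝ) (hv : v ᵥ* EW = v) (hv1 : ∑ i, v i = 1)
    (vR : Fin n × Fin n → ℝ) (hvR : vR ᵥ* ER = vR) (hvR1 : ∑ p, vR p = 1)
    (x0 : Fin n → ℝ) :
    variance (fun ω => ∑ i, d ω i * x0 i) μ
      = (∑ p : Fin n × Fin n, x0 p.1 * x0 p.2 * vR p) - (∑ i, x0 i * v i) ^ 2 :=
  variance_of_asymptotic_consensus_value_general μ W hmeas hindep hident hstoch d hconv EW hEW ER
    hER v hv hv1 vR hvR hvR1 x0
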